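/- Let 0 < τ < T, let λ > 0, let Z be uniformly distributed on [0, T − τ], and let S be exponentially distributed with rate λ, with Z and S independent. Then the probability that τ + Z + S lands in some ON interval [nT, nT + τ), summed over all integers n ≥ 1, equals p := ( e^{λT} + 1 − e^{λτ} − e^{λ(T−τ)} ) / ( λ (e^{λT} − 1)(T − τ) ); that is, Σ_{n=1}^{∞} P( nT ≤ τ + Z + S < nT + τ ) = p. -/

import Mathlib

/-!
Conditionally on `Z = z`, the exponential `S` falls in `[a - z, c - z)` with probability
`e^{-λa} - e^{-λc}` times `e^{λz}`. Averaging `e^{λZ}` over the uniform `Z` gives the factor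
`(e^{λ(T-τ)} - 1) / (λ(T-τ))`; for the `n`-th ON window `[(n+1)T - τ, (n+1)T)` the remaining factor
is `(e^{λτ} - 1) e^{-λ(n+1)T}`, a geometric sequence summing to `(e^{λτ} - 1) / (e^{λT} - 1)`.
Since `e^{λT} = e^{λτ} e^{λ(T-τ)}`, the product is the closed form.
-/

open MeasureTheory ProbabilityTheory Real Set

namespace MeasureTheory.Measure

theorem conv_apply {M : Type*} [AddMonoid M] [MeasurableSpace M] [MeasurableAdd₂ M]
    (μ ν : Measure M) [SFinite ν] {s : Set M} (hs : MeasurableSet s) :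
    (μ ∗ ν) s = ∫⁻ x, ν ((x + ·) ⁻¹' s) ∂μ := by
  rw [← lintegral_indicator_one hs, lintegral_conv (measurable_one.indicator hs)]
  congr with x
  rw [← lintegral_indicator_one (measurable_const_add x hs)]
  rfl

end MeasureTheory.Measure

namespace ProbabilityTheory

lemma expMeasure_singleton (r x : ℝ) : expMeasure r {x} = 0 :=
  withDensity_absolutelyContinuous _ _ Real.volume_singleton

lemma expMeasure_Ico {r : ℝ} (hr : 0 < r) {x y : ℝ} (hx : 0 ≤ x) (hxy : x ≤ y) :
    expMeasure r (Ico x y) = ENNReal.ofReal (exp (-(r * x)) - exp (-(r * y))) := by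
  have := isProbabilityMeasure_expMeasure hr
  rw [measure_congr (Ico_ae_eq_Ioc' (expMeasure_singleton r x) (expMeasure_singleton r y)),
    ← measure_cdf (expMeasure r), StieltjesFunction.measure_Ioc, cdf_expMeasure_eq hr,
    cdf_expMeasure_eq hr, if_pos hx, if_pos (hx.trans hxy), sub_sub_sub_cancel_left]

end ProbabilityTheory

lemma lintegral_Icc_ofReal_exp_mul {c : ℝ} (hc : c ≠ 0) {b : ℝ} (hb : 0 ≤ b) :
    ∫⁻ z in Icc 0 b, ENNReal.ofReal (exp (c * z)) = ENNReal.ofReal ((exp (c * b) - 1) / c) := by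
  rw [← ofReal_integral_eq_lintegral_ofReal
    (by fun_prop : Continuous fun z ↦ exp (c * z)).integrableOn_Icc
    (ae_of_all _ fun _ ↦ (exp_pos _).le), integral_Icc_eq_integral_Ioc,
    ← intervalIntegral.integral_of_le hb, intervalIntegral.integral_comp_mul_left _ hc,
    mul_zero, integral_exp, exp_zero, smul_eq_mul, inv_mul_eq_div]

lemma toReal_measure_add_mem_Ico_of_uniform_of_exp {Ω : Type*} [MeasurableSpace Ω]
    {μ : Measure Ω} [IsFiniteMeasure μ] {Z S : Ω → ℝ} (hZ : Measurable Z) (hS : Measurable S)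
    (hindep : IndepFun Z S μ) {b lam : ℝ} (hb : 0 < b) (hlam : 0 < lam)
    (hZunif : μ.map Z = (ENNReal.ofReal b)⁻¹ • volume.restrict (Icc 0 b))
    (hSexp : μ.map S = expMeasure lam) {a c : ℝ} (hba : b ≤ a) (hac : a ≤ c) :
    (μ {ω | a ≤ Z ω + S ω ∧ Z ω + S ω < c}).toReal
      = (exp (lam * b) - 1) / (lam * b) * (exp (-(lam * a)) - exp (-(lam * c))) := by
  set K := exp (-(lam * a)) - exp (-(lam * c))
  have hK : 0 ≤ K := sub_nonneg.2 (exp_le_exp.2 (by nlinarith))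
  have hexp : EqOn (fun z ↦ expMeasure lam (Ico (a - z) (c - z)))
      (fun z ↦ ENNReal.ofReal K * ENNReal.ofReal (exp (lam * z))) (Icc 0 b) := by
    intro z hz
    dsimp only
    rw [expMeasure_Ico hlam (by linarith [hz.2]) (by linarith), ← ENNReal.ofReal_mul hK]
    congr 1
    simp only [K, sub_mul, ← exp_add]
    ring_nf
  have hevent : {ω | a ≤ Z ω + S ω ∧ Z ω + S ω < c} = (Z + S) ⁻¹' Ico a c := rfl
  rw [hevent, ← Measure.map_apply (hZ.add hS) measurableSet_Ico,
    hindep.map_add_eq_map_conv_map hZ hS, Measure.conv_apply _ _ measurableSet_Ico, hZunif, hSexp,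
    lintegral_smul_measure]
  simp only [preimage_const_add_Ico]
  rw [setLIntegral_congr_fun measurableSet_Icc hexp, lintegral_const_mul _ (by fun_prop),
    lintegral_Icc_ofReal_exp_mul hlam.ne' hb.le, smul_eq_mul, ENNReal.toReal_mul,
    ENNReal.toReal_mul, ENNReal.toReal_inv, ENNReal.toReal_ofReal hb.le, ENNReal.toReal_ofReal hK,
    ENNReal.toReal_ofReal (div_nonneg (sub_nonneg.2 (one_le_exp (by positivity))) hlam.le)]
  field_simp

lemma tsum_exp_neg_pow_succ {x : ℝ} (hx : 0 < x) :
    ∑' n : ℕ, exp (-x) ^ (n + 1) = (exp x - 1)⁻¹ := by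
  have hlt : exp (-x) < 1 := exp_lt_one_iff.2 (neg_lt_zero.2 hx)
  have hne : exp x - 1 ≠ 0 := (sub_pos.2 (one_lt_exp_iff.2 hx)).ne'
  simp only [pow_succ, tsum_mul_right]
  rw [tsum_geometric_of_lt_one (exp_pos _).le hlt, exp_neg]
  field_simp

/-- Closed form for `p` in the exponential case: if `Z ~ Unif(0, T - τ)` and
`S ~ Exp(lam)` are independent, then the total probability that `τ + Z + S` lands in
some ON interval `[nT, nT + τ)` (summed over `n ≥ 1`) equals
`(e^{lam T} + 1 - e^{lam τ} - e^{lam (T-τ)}) / (lam (e^{lam T} - 1)(T - τ))`. -/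
theorem stmt_6 {Ω : Type*} [MeasurableSpace Ω] (μ : Measure Ω) [IsProbabilityMeasure μ]
    (τ T lam : ℝ) (hτ : 0 < τ) (hτT : τ < T) (hlam : 0 < lam)
    (Z S : Ω → ℝ) (hZmeas : Measurable Z) (hSmeas : Measurable S)
    (hZunif : Measure.map Z μ
      = (ENNReal.ofReal (T - τ))⁻¹ • volume.restrict (Set.Icc 0 (T - τ)))
    (hSexp : Measure.map S μ = expMeasure lam)
    (hindep : IndepFun Z S μ) :
    ∑' n : ℕ, (μ {ω | ((n : ℝ) + 1) * T ≤ τ + Z ω + S ω ∧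
        τ + Z ω + S ω < ((n : ℝ) + 1) * T + τ}).toReal
      = (Real.exp (lam * T) + 1 - Real.exp (lam * τ) - Real.exp (lam * (T - τ))) /
          (lam * (Real.exp (lam * T) - 1) * (T - τ)) := by
  have hb : 0 < T - τ := sub_pos.2 hτT
  have hlamT : 0 < lam * T := mul_pos hlam (hτ.trans hτT)
  have hterm (n : ℕ) : (μ {ω | ((n : ℝ) + 1) * T ≤ τ + Z ω + S ω ∧
      τ + Z ω + S ω < ((n : ℝ) + 1) * T + τ}).toReal
        = (exp (lam * (T - τ)) - 1) / (lam * (T - τ)) * (exp (lam * τ) - 1)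
          * exp (-(lam * T)) ^ (n + 1) := by
    have hn : (0 : ℝ) ≤ n := n.cast_nonneg
    have hevent : {ω | ((n : ℝ) + 1) * T ≤ τ + Z ω + S ω ∧
        τ + Z ω + S ω < ((n : ℝ) + 1) * T + τ}
          = {ω | (n + 1) * T - τ ≤ Z ω + S ω ∧ Z ω + S ω < (n + 1) * T} := by
      ext ω
      constructor <;> rintro ⟨h₁, h₂⟩ <;> constructor <;> linarith
    have hpow : exp (-(lam * T)) ^ (n + 1) = exp (-(lam * ((n + 1) * T))) := by
      rw [← exp_nat_mul]
      push_cast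
      ring_nf
    rw [hevent, toReal_measure_add_mem_Ico_of_uniform_of_exp hZmeas hSmeas hindep hb hlam hZunif
      hSexp (by nlinarith) (by linarith), hpow, mul_assoc, sub_mul, ← exp_add, one_mul]
    ring_nf
  have hne : exp (lam * T) - 1 ≠ 0 := (sub_pos.2 (one_lt_exp_iff.2 hlamT)).ne'
  have hsplit : exp (lam * T) = exp (lam * τ) * exp (lam * (T - τ)) := by
    rw [← exp_add]; ring_nf
  simp only [hterm]
  rw [tsum_mul_left, tsum_exp_neg_pow_succ hlamT]
  field_simp
  rw [hsplit]
  ring
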